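/- arXiv:1607.05267 — 7 statements merged into one kernel-verified Lean document; each statement's English description precedes it below -/
import Mathlib

section
/- If n is an integer exceeding 1, then the smallest prime not dividing n divides n^(n^n) - 1. -/
/-! The smallest prime `p` not dividing `n` is at most `n + 1`, since the least prime factor of
`n + 1` does not divide `n`. Every prime factor of `p - 1` is smaller than `p`, hence divides `n`;
as its exponent in `p - 1` is below `p - 1 ≤ n`, this gives `p - 1 ∣ n ^ n`, and Fermat's little
theorem yields `n ^ n ^ n ≡ 1 [MOD p]`. -/

namespace Nat

theorem dvd_pow_self_of_primeFactors_subset {m n : ℕ} (hm : m ≠ 0) (hn : n ≠ 0)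
    (h : m.primeFactors ⊆ n.primeFactors) : m ∣ n ^ m := by
  rw [← factorization_le_iff_dvd hm (pow_ne_zero m hn)]
  intro q
  rw [factorization_pow, Finsupp.smul_apply, smul_eq_mul]
  by_cases hq : q ∈ m.primeFactors
  · obtain ⟨hq, hqn, -⟩ := mem_primeFactors.mp (h hq)
    calc m.factorization q ≤ m := (factorization_lt q hm).le
      _ ≤ m * n.factorization q := Nat.le_mul_of_pos_right m (hq.factorization_pos_of_dvd hn hqn)
  · rw [← support_factorization, Finsupp.notMem_support_iff] at hq
    simp [hq]

theorem primeFactors_sub_one_subset {p n : ℕ} (hn : n ≠ 0)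
    (h : ∀ q, q.Prime → q < p → q ∣ n) : (p - 1).primeFactors ⊆ n.primeFactors := by
  intro q hq
  obtain ⟨hq, hqp, hp⟩ := mem_primeFactors.mp hq
  have hlt : q < p := by have := le_of_dvd (pos_of_ne_zero hp) hqp; omega
  exact mem_primeFactors.mpr ⟨hq, h q hq hlt, hn⟩

theorem minFac_succ_not_dvd {n : ℕ} (hn : n ≠ 0) : ¬ (n + 1).minFac ∣ n := fun h =>
  (minFac_prime (by omega)).not_dvd_one ((Nat.dvd_add_right h).mp (minFac_dvd (n + 1)))

theorem Prime.dvd_pow_sub_one_of_sub_one_dvd {p n k : ℕ} (hp : p.Prime) (hpn : ¬ p ∣ n)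
    (hk : p - 1 ∣ k) : p ∣ n ^ k - 1 := by
  obtain ⟨c, rfl⟩ := hk
  have hfermat : n ^ (p - 1) ≡ 1 [MOD p] :=
    ModEq.pow_card_sub_one_eq_one hp (hp.coprime_iff_not_dvd.mpr hpn).symm
  have hn : n ≠ 0 := by rintro rfl; exact hpn (dvd_zero p)
  refine (modEq_iff_dvd' (one_le_pow _ _ (pos_of_ne_zero hn))).mp ?_
  simpa [pow_mul] using (hfermat.pow c).symm

end Nat

theorem smallest_prime_not_dividing_divides_general (n : ℕ) :
    sInf {p : ℕ | p.Prime ∧ ¬ p ∣ n} ∣ n ^ (n ^ n) - 1 := by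
  -- For `n = 0` the set is empty, so `sInf` is `0`, and `0 ^ 0 ^ 0 - 1 = 0`.
  rcases Nat.eq_zero_or_pos n with rfl | hn
  · simp
  set S := {p : ℕ | p.Prime ∧ ¬ p ∣ n}
  have hmin : (n + 1).minFac ∈ S :=
    ⟨Nat.minFac_prime (by omega), Nat.minFac_succ_not_dvd hn.ne'⟩
  obtain ⟨hp, hpn⟩ : sInf S ∈ S := Nat.sInf_mem ⟨_, hmin⟩
  have hp_le : sInf S - 1 ≤ n := by
    have := (Nat.sInf_le hmin).trans (Nat.minFac_le n.succ_pos); omega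
  have hsmall : ∀ q, q.Prime → q < sInf S → q ∣ n := fun q hq hlt =>
    by_contra fun h => Nat.notMem_of_lt_sInf hlt ⟨hq, h⟩
  have hdvd : sInf S - 1 ∣ n ^ n :=
    (Nat.dvd_pow_self_of_primeFactors_subset (Nat.sub_ne_zero_of_lt hp.one_lt) hn.ne'
      (Nat.primeFactors_sub_one_subset hn.ne' hsmall)).trans (pow_dvd_pow n hp_le)
  exact hp.dvd_pow_sub_one_of_sub_one_dvd hpn hdvd

theorem smallest_prime_not_dividing_divides (n : ℕ) (hn : 1 < n) :
    sInf {p : ℕ | p.Prime ∧ ¬ p ∣ n} ∣ n ^ (n ^ n) - 1 :=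
  smallest_prime_not_dividing_divides_general n
end

section
/- If n is an integer exceeding 1, then the least prime divisor of n^(n^n) - 1 equals the smallest prime not dividing n. -/
theorem minFac_superpower (n : ℕ) (hn : 1 < n) :
    (n ^ (n ^ n) - 1).minFac = sInf {p : ℕ | p.Prime ∧ ¬ p ∣ n} := by
  have hn0 : n ≠ 0 := by omega
  -- the set is nonempty
  have hne : {p : ℕ | p.Prime ∧ ¬ p ∣ n}.Nonempty := by
    obtain ⟨p, hpn, hp⟩ := Nat.exists_infinite_primes (n + 1)
    exact ⟨p, hp, fun h => by have := Nat.le_of_dvd (by omega) h; omega⟩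
  set q := sInf {p : ℕ | p.Prime ∧ ¬ p ∣ n} with hq_def
  obtain ⟨hq, hqn⟩ : q.Prime ∧ ¬ q ∣ n := Nat.sInf_mem hne
  -- every prime below q divides n
  have hlt : ∀ p : ℕ, p.Prime → p < q → p ∣ n := by
    intro p hp hpq
    by_contra h
    have : q ≤ p := Nat.sInf_le (show p ∈ {p : ℕ | p.Prime ∧ ¬ p ∣ n} from ⟨hp, h⟩)
    omega
  -- q - 1 ≤ n
  have hq1n : q - 1 ≤ n := by
    rcases lt_or_ge q 5 with h5 | h5
    · have h2q := hq.two_le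
      have h4 : q ≠ 4 := fun h => by rw [h] at hq; norm_num at hq
      omega
    · have hqodd : ¬ 2 ∣ q := by
        intro h; exact absurd ((Nat.prime_dvd_prime_iff_eq Nat.prime_two hq).mp h) (by omega)
      have h2 : (2 : ℕ) ∣ n := hlt 2 Nat.prime_two (by omega)
      obtain ⟨r, hr, hrlt, hrle⟩ := Nat.exists_prime_lt_and_le_two_mul (q / 2) (by omega)
      have hq2 : 2 * (q / 2) = q - 1 := by omega
      have hrn : r ∣ n := hlt r hr (by omega)
      have hr2 : r ≠ 2 := by omega
      have h2r : 2 * r ∣ n := Nat.Coprime.mul_dvd_of_dvd_of_dvd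
        (Nat.coprime_primes Nat.prime_two hr |>.mpr (Ne.symm hr2)) h2 hrn
      have := Nat.le_of_dvd (by omega) h2r
      omega
  -- q - 1 ∣ n ^ n
  have hdvd1 : q - 1 ∣ n ^ n := by
    have hq1 : q - 1 ≠ 0 := by have := hq.two_le; omega
    rw [← Nat.factorization_le_iff_dvd hq1 (pow_ne_zero n hn0)]
    intro p
    rcases Nat.eq_zero_or_pos ((q - 1).factorization p) with h0 | hpos
    · simp [h0]
    · have hp : p.Prime := Nat.prime_of_mem_primeFactors (by
        rw [← Nat.support_factorization]
        exact Finsupp.mem_support_iff.mpr hpos.ne')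
      have hpd : p ∣ q - 1 := Nat.dvd_of_factorization_pos (by omega)
      have hpq : p < q := by
        have := Nat.le_of_dvd (by omega) hpd
        have := hq.two_le; omega
      have hpn : p ∣ n := hlt p hp hpq
      have h1 : 1 ≤ n.factorization p := (Nat.Prime.factorization_pos_of_dvd hp hn0 hpn)
      have h2 : (q - 1).factorization p < q - 1 := Nat.factorization_lt p hq1
      rw [Nat.factorization_pow]
      simp only [Finsupp.smul_apply, smul_eq_mul]
      calc (q - 1).factorization p ≤ n := by omega
        _ ≤ n * n.factorization p := Nat.le_mul_of_pos_right n h1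
  -- q divides n^(n^n) - 1
  have hbig : 1 ≤ n ^ (n ^ n) := Nat.one_le_pow _ _ (by omega)
  have hqN : q ∣ n ^ (n ^ n) - 1 := by
    obtain ⟨m, hm⟩ := hdvd1
    have hcop : n.Coprime q := (Nat.coprime_comm.mp ((hq.coprime_iff_not_dvd).mpr hqn))
    have hF : n ^ (q - 1) ≡ 1 [MOD q] := by
      have := Nat.ModEq.pow_totient hcop
      rwa [Nat.totient_prime hq] at this
    have : n ^ (n ^ n) ≡ 1 [MOD q] := by
      calc n ^ (n ^ n) = (n ^ (q - 1)) ^ m := by rw [← pow_mul, ← hm]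
        _ ≡ 1 ^ m [MOD q] := hF.pow m
        _ = 1 := one_pow m
    exact (Nat.modEq_iff_dvd' hbig).mp this.symm
  -- N > 1
  have hN : 1 < n ^ (n ^ n) - 1 := by
    have h1 : n ^ n ≥ 2 := le_trans hn (Nat.le_self_pow hn0 n)
    have : n ^ (n ^ n) ≥ n ^ 2 := Nat.pow_le_pow_right (by omega) h1
    have : n ^ 2 ≥ 4 := by nlinarith
    omega
  -- conclude
  have hmf := Nat.minFac_prime (by omega : n ^ (n ^ n) - 1 ≠ 1)
  have hle : (n ^ (n ^ n) - 1).minFac ≤ q := Nat.minFac_le_of_dvd hq.two_le hqN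
  have hge : q ≤ (n ^ (n ^ n) - 1).minFac := by
    by_contra h
    push_neg at h
    have hdn : (n ^ (n ^ n) - 1).minFac ∣ n := hlt _ hmf h
    have hd1 : (n ^ (n ^ n) - 1).minFac ∣ 1 := by
      have h3 : (n ^ (n ^ n) - 1).minFac ∣ n ^ (n ^ n) - (n ^ (n ^ n) - 1) :=
        Nat.dvd_sub (hdn.trans (dvd_pow_self n (by positivity))) (Nat.minFac_dvd _)
      rwa [Nat.sub_sub_self hbig] at h3
    exact hmf.one_lt.ne' (Nat.dvd_one.mp hd1)
  omega
end

section
/- If n is an integer exceeding 1, then the least divisor of n^(n^n) - 1 that exceeds 1 is the smallest prime not dividing n. -/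
/-!
Let `q` be the least prime not dividing `n`. Since `(n + 1).minFac` does not divide `n`, we have
`q ≤ n + 1`; every prime factor of `q - 1` is smaller than `q`, hence divides `n`, and occurs in
`q - 1` with exponent less than `q - 1 ≤ n`. So `q - 1 ∣ n ^ n`, and Fermat's little theorem gives
`q ∣ n ^ (n ^ n) - 1`. Conversely no divisor `d > 1` of `n ^ (n ^ n) - 1` divides `n`, so the least
such divisor, a prime, is at least `q`.
-/

namespace Nat

theorem dvd_pow_of_primeFactors_subset {a b k : ℕ} (ha : a ≠ 0) (hb : b ≠ 0) (hak : a ≤ k)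
    (h : a.primeFactors ⊆ b.primeFactors) : a ∣ b ^ k := by
  rw [← factorization_le_iff_dvd ha (pow_ne_zero _ hb)]
  intro p
  by_cases hp : p ∈ a.primeFactors
  · have hpb : 0 < b.factorization p := by
      simpa [← support_factorization, Finsupp.mem_support_iff, Nat.pos_iff_ne_zero] using h hp
    calc a.factorization p ≤ k := ((a.factorization_lt p ha).trans_le hak).le
      _ ≤ k * b.factorization p := Nat.le_mul_of_pos_right k hpb
      _ = (b ^ k).factorization p := by simp [factorization_pow]
  · simp only [← support_factorization, Finsupp.mem_support_iff, not_not] at hp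
    simp [hp]

theorem not_dvd_of_dvd_pow_sub_one {d n k : ℕ} (hd : d ≠ 1) (hn : n ≠ 0) (hk : k ≠ 0)
    (h : d ∣ n ^ k - 1) : ¬ d ∣ n := by
  intro hdn
  have : d ∣ n ^ k - (n ^ k - 1) := Nat.dvd_sub (hdn.trans (dvd_pow_self n hk)) h
  rw [Nat.sub_sub_self (Nat.one_le_pow _ _ (Nat.pos_of_ne_zero hn))] at this
  exact hd (Nat.dvd_one.mp this)

theorem sInf_one_lt_dvd_eq_minFac {m : ℕ} (hm : m ≠ 1) :
    sInf {d : ℕ | 1 < d ∧ d ∣ m} = m.minFac := by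
  have hmem : m.minFac ∈ {d : ℕ | 1 < d ∧ d ∣ m} := ⟨(minFac_prime hm).one_lt, minFac_dvd m⟩
  exact le_antisymm (Nat.sInf_le hmem)
    (le_csInf ⟨_, hmem⟩ fun d ⟨hd, hdm⟩ => minFac_le_of_dvd hd hdm)

end Nat

open Nat

noncomputable def leastPrimeNotDvd (n : ℕ) : ℕ := sInf {p : ℕ | p.Prime ∧ ¬ p ∣ n}

section leastPrimeNotDvd

variable {n p : ℕ}

theorem leastPrimeNotDvd_le (hp : p.Prime) (hpn : ¬ p ∣ n) : leastPrimeNotDvd n ≤ p :=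
  Nat.sInf_le ⟨hp, hpn⟩

theorem dvd_of_lt_leastPrimeNotDvd (hp : p.Prime) (hpn : p < leastPrimeNotDvd n) : p ∣ n := by
  by_contra h
  exact (leastPrimeNotDvd_le hp h).not_gt hpn

theorem leastPrimeNotDvd_spec (hn : n ≠ 0) :
    (leastPrimeNotDvd n).Prime ∧ ¬ leastPrimeNotDvd n ∣ n :=
  Nat.sInf_mem (s := {p : ℕ | p.Prime ∧ ¬ p ∣ n})
    ⟨_, minFac_prime (by omega), minFac_succ_not_dvd hn⟩

theorem leastPrimeNotDvd_le_succ (hn : n ≠ 0) : leastPrimeNotDvd n ≤ n + 1 :=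
  (leastPrimeNotDvd_le (minFac_prime (by omega)) (minFac_succ_not_dvd hn)).trans
    (minFac_le n.succ_pos)

theorem leastPrimeNotDvd_sub_one_dvd_pow (hn : n ≠ 0) : leastPrimeNotDvd n - 1 ∣ n ^ n := by
  have hq := (leastPrimeNotDvd_spec hn).1.two_le
  refine dvd_pow_of_primeFactors_subset (by omega) hn
    (by have := leastPrimeNotDvd_le_succ hn; omega) fun p hp => ?_
  have hp' := prime_of_mem_primeFactors hp
  have hpq := le_of_dvd (by omega) (dvd_of_mem_primeFactors hp)
  exact mem_primeFactors.mpr ⟨hp', dvd_of_lt_leastPrimeNotDvd hp' (by omega), hn⟩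

end leastPrimeNotDvd

theorem least_divisor_superpower (n : ℕ) (hn : 1 < n) :
    sInf {d : ℕ | 1 < d ∧ d ∣ n ^ (n ^ n) - 1} = sInf {p : ℕ | p.Prime ∧ ¬ p ∣ n} := by
  have hn0 : n ≠ 0 := by omega
  obtain ⟨hq, hqn⟩ := leastPrimeNotDvd_spec hn0
  have hM : n ^ (n ^ n) - 1 ≠ 1 := by
    have h2 : 2 ≤ n ^ n := hn.trans (Nat.lt_pow_self hn)
    have : 2 ^ 2 ≤ n ^ (n ^ n) := (Nat.pow_le_pow_left hn 2).trans (Nat.pow_le_pow_right hn.le h2)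
    omega
  have hqM : leastPrimeNotDvd n ∣ n ^ (n ^ n) - 1 :=
    hq.dvd_pow_sub_one_of_sub_one_dvd hqn (leastPrimeNotDvd_sub_one_dvd_pow hn0)
  have hMn : ¬ (n ^ (n ^ n) - 1).minFac ∣ n :=
    not_dvd_of_dvd_pow_sub_one (minFac_prime hM).one_lt.ne' hn0 (pow_ne_zero _ hn0) (minFac_dvd _)
  rw [sInf_one_lt_dvd_eq_minFac hM]
  exact le_antisymm (minFac_le_of_dvd hq.two_le hqM) (leastPrimeNotDvd_le (minFac_prime hM) hMn)
end

section
/- When N is an integer exceeding 1, the smallest prime exceeding N is the least divisor exceeding 1 of (N!)^((N!)^(N!)) - 1. -/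
/-!
Let `F = N!` and let `p` be the least prime above `N`. A divisor `d > 1` of `F ^ (F ^ F) - 1`
is coprime to `F`, so its least prime factor exceeds `N`, whence `p ≤ d`. Conversely every
prime factor of `p - 1` is below `p`, hence at most `N`, hence divides `F`; as `p - 1 ≤ F`
(Euclid: `p ≤ (F + 1).minFac`), this gives `p - 1 ∣ F ^ (p - 1) ∣ F ^ F`, and Fermat's little
theorem yields `p ∣ F ^ (F ^ F) - 1`.
-/

namespace Nat

theorem Prime.dvd_pow_sub_one_of_sub_one_dvd_s7 {p a m : ℕ} (hp : p.Prime) (ha : a.Coprime p)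
    (hm : p - 1 ∣ m) : p ∣ a ^ m - 1 := by
  obtain ⟨k, rfl⟩ := hm
  rw [pow_mul]
  have hfermat := (ModEq.pow_card_sub_one_eq_one hp ha).pow k
  rw [one_pow] at hfermat
  exact dvd_of_mod_eq_zero (sub_mod_eq_zero_of_mod_eq hfermat)

theorem coprime_pow_sub_one_self {a k : ℕ} (ha : a ≠ 0) (hk : k ≠ 0) :
    (a ^ k - 1).Coprime a := by
  have hpow : (a ^ k - 1).Coprime (a ^ k) :=
    ((coprime_self_sub_left (one_le_pow k a (pos_of_ne_zero ha))).mpr (coprime_one_left _))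
  exact hpow.coprime_dvd_right (dvd_pow_self a hk)

noncomputable def leastPrimeAbove (N : ℕ) : ℕ := sInf {p : ℕ | p.Prime ∧ N < p}

variable {N : ℕ}

theorem leastPrimeAbove_spec (N : ℕ) : (leastPrimeAbove N).Prime ∧ N < leastPrimeAbove N := by
  obtain ⟨p, hNp, hp⟩ := exists_infinite_primes (N + 1)
  exact Nat.sInf_mem (s := {p : ℕ | p.Prime ∧ N < p}) ⟨p, hp, hNp⟩

theorem leastPrimeAbove_le {p : ℕ} (hp : p.Prime) (hNp : N < p) : leastPrimeAbove N ≤ p :=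
  Nat.sInf_le ⟨hp, hNp⟩

theorem le_of_prime_lt_leastPrimeAbove {q : ℕ} (hq : q.Prime) (hqp : q < leastPrimeAbove N) :
    q ≤ N :=
  not_lt.mp fun hNq => (leastPrimeAbove_le hq hNq).not_gt hqp

theorem leastPrimeAbove_le_of_coprime_factorial {m : ℕ} (hm : 1 < m) (h : m.Coprime N !) :
    leastPrimeAbove N ≤ m :=
  calc leastPrimeAbove N ≤ m.minFac :=
        leastPrimeAbove_le (minFac_prime hm.ne') ((coprime_factorial_iff hm.ne').mp h)
    _ ≤ m := minFac_le (by omega)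

theorem leastPrimeAbove_le_factorial_add_one (N : ℕ) : leastPrimeAbove N ≤ N ! + 1 :=
  leastPrimeAbove_le_of_coprime_factorial (by have := factorial_pos N; omega) (by simp)

theorem leastPrimeAbove_sub_one_dvd_factorial_pow (N : ℕ) :
    leastPrimeAbove N - 1 ∣ N ! ^ N ! := by
  obtain ⟨hp, -⟩ := leastPrimeAbove_spec N
  have hp1 : leastPrimeAbove N - 1 ≠ 0 := by have := hp.two_le; omega
  have hsmooth : (leastPrimeAbove N - 1).primeFactors ⊆ (N !).primeFactors := by
    intro q hq
    obtain ⟨hq, hqdvd, -⟩ := mem_primeFactors.mp hq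
    have hqp : q < leastPrimeAbove N := by have := le_of_dvd (by omega) hqdvd; omega
    have hqN : q ≤ N := le_of_prime_lt_leastPrimeAbove hq hqp
    exact mem_primeFactors.mpr ⟨hq, dvd_factorial hq.pos hqN, factorial_ne_zero N⟩
  calc leastPrimeAbove N - 1 ∣ N ! ^ (leastPrimeAbove N - 1) :=
        (dvd_pow_self_iff hp1 (factorial_ne_zero N)).mpr hsmooth
    _ ∣ N ! ^ N ! :=
        pow_dvd_pow _ (by have := leastPrimeAbove_le_factorial_add_one N; omega)

theorem leastPrimeAbove_dvd_factorial_pow_sub_one (N : ℕ) :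
    leastPrimeAbove N ∣ N ! ^ (N ! ^ N !) - 1 := by
  obtain ⟨hp, hNp⟩ := leastPrimeAbove_spec N
  exact hp.dvd_pow_sub_one_of_sub_one_dvd_s7 (hp.coprime_factorial_of_lt hNp).symm
    (leastPrimeAbove_sub_one_dvd_factorial_pow N)

theorem isLeast_leastPrimeAbove_dvd_factorial_pow_sub_one (N : ℕ) :
    IsLeast {d : ℕ | 1 < d ∧ d ∣ N ! ^ (N ! ^ N !) - 1} (leastPrimeAbove N) := by
  have hcoprime : (N ! ^ (N ! ^ N !) - 1).Coprime N ! :=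
    coprime_pow_sub_one_self (factorial_ne_zero N) (pow_ne_zero _ (factorial_ne_zero N))
  refine ⟨⟨(leastPrimeAbove_spec N).1.one_lt, leastPrimeAbove_dvd_factorial_pow_sub_one N⟩,
    fun d ⟨hd, hdvd⟩ => ?_⟩
  exact leastPrimeAbove_le_of_coprime_factorial hd (hcoprime.coprime_dvd_left hdvd)

end Nat

theorem next_prime_factorial_superpower_general (N : ℕ) :
    sInf {p : ℕ | p.Prime ∧ N < p} =
      sInf {d : ℕ | 1 < d ∧ d ∣ (Nat.factorial N) ^ ((Nat.factorial N) ^ (Nat.factorial N)) - 1} :=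
  (Nat.isLeast_leastPrimeAbove_dvd_factorial_pow_sub_one N).csInf_eq.symm

theorem next_prime_factorial_superpower (N : ℕ) (hN : 1 < N) :
    sInf {p : ℕ | p.Prime ∧ N < p} =
      sInf {d : ℕ | 1 < d ∧ d ∣ (Nat.factorial N) ^ ((Nat.factorial N) ^ (Nat.factorial N)) - 1} :=
  next_prime_factorial_superpower_general N
end

section
/- For each natural number N ≥ 1, the smallest prime exceeding N divides (N!)^(N!) - 1. -/
lemma two_mul_dvd_factorial {m n : ℕ} (h3 : 3 ≤ m) (hmn : m ≤ n) :
    2 * m ∣ n.factorial := by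
  have h1 : 2 * m ∣ m.factorial := by
    obtain ⟨k, rfl⟩ : ∃ k, m = k + 1 := ⟨m - 1, by omega⟩
    rw [Nat.factorial_succ]
    exact mul_comm 2 (k+1) ▸ mul_dvd_mul (dvd_refl (k+1)) (Nat.dvd_factorial (by omega) (by omega))
  exact dvd_trans h1 (Nat.factorial_dvd_factorial hmn)

lemma prime_finish (p n : ℕ) (hp : p.Prime) (hpn : n < p) (hdvd : p - 1 ∣ n.factorial) :
    p ∣ n.factorial ^ n.factorial - 1 := by
  haveI := Fact.mk hp
  have h0 : (n.factorial : ZMod p) ≠ 0 := by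
    rw [Ne, ZMod.natCast_eq_zero_iff, hp.dvd_factorial]
    omega
  have hf : (n.factorial : ZMod p) ^ (p - 1) = 1 := ZMod.pow_card_sub_one_eq_one h0
  obtain ⟨k, hk⟩ := hdvd
  have h1 : ((n.factorial ^ n.factorial : ℕ) : ZMod p) = ((1 : ℕ) : ZMod p) := by
    push_cast
    rw [hk, pow_mul, ← hk, hf, one_pow]
  have h2 : n.factorial ^ n.factorial ≡ 1 [MOD p] := (ZMod.natCast_eq_natCast_iff _ _ _).mp h1
  have h3 : 1 ≤ n.factorial ^ n.factorial := Nat.one_le_pow _ _ n.factorial_pos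
  exact (Nat.modEq_iff_dvd' h3).mp h2.symm

theorem next_prime_dvd_factorial_pow (N : ℕ) (hN : 1 ≤ N) :
    sInf {p : ℕ | p.Prime ∧ N < p} ∣ (Nat.factorial N) ^ (Nat.factorial N) - 1 := by
  obtain ⟨q, hqle, hq⟩ := Nat.exists_infinite_primes (N + 1)
  have hSne : {p : ℕ | p.Prime ∧ N < p}.Nonempty := ⟨q, hq, by omega⟩
  obtain ⟨hp, hpN⟩ := Nat.sInf_mem hSne
  set p := sInf {p : ℕ | p.Prime ∧ N < p} with hpdef
  have hmin : ∀ r, r.Prime → N < r → p ≤ r := fun r h1 h2 => Nat.sInf_le ⟨h1, h2⟩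
  rcases eq_or_ne N 1 with rfl | h1
  · simp [Nat.factorial]
  rcases eq_or_ne N 3 with rfl | h3
  · have hp5 : p = 5 := by
      have h5 : p ≤ 5 := hmin 5 (by norm_num) (by norm_num)
      have h4 : p ≠ 4 := fun h => by rw [h] at hp; norm_num at hp
      omega
    rw [hp5]; decide
  -- general case: show p - 1 ∣ N !
  have hdvd : p - 1 ∣ N.factorial := by
    obtain ⟨r, hr, hrN, hr2N⟩ := Nat.exists_prime_lt_and_le_two_mul N (by omega)
    have hple : p ≤ 2 * N := le_trans (hmin r hr hrN) hr2N
    have hodd : ¬ 2 ∣ p := by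
      intro h2
      have hp2 : p = 2 := ((Nat.prime_dvd_prime_iff_eq Nat.prime_two hp).mp h2).symm
      omega
    set m := (p - 1) / 2 with hm
    have hpm : p - 1 = 2 * m := by omega
    have hmN : m ≤ N - 1 := by omega
    rcases le_or_gt 3 m with hm3 | hm3
    · rw [hpm]; exact two_mul_dvd_factorial hm3 (by omega)
    · -- m ≤ 2, so p ≤ 5
      have hN2 : N < p := hpN
      interval_cases m
      · omega
      · -- p = 3, N = 2
        have hp3 : p = 3 := by omega
        have hN2' : N = 2 := by omega
        rw [hpm, hN2']; decide
      · -- p = 5, N = 4 (N=2 contradicts minimality, N=3 excluded)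
        have hp5 : p = 5 := by omega
        have hN4 : N = 4 := by
          have := hmin 3 (by norm_num)
          rcases Nat.lt_or_ge N 3 with h | h
          · have : p ≤ 3 := hmin 3 (by norm_num) (by omega)
            omega
          · omega
        rw [hpm, hN4]; decide
  exact prime_finish p N hp hpN hdvd
end

section
/- For each natural number N ≥ 1, the smallest prime exceeding N is the least divisor exceeding 1 of (N!)^(N!) - 1. -/
lemma mul_dvd_factorial_of_ne {a b N : ℕ} (ha : 1 ≤ a) (hb : 1 ≤ b)
    (haN : a ≤ N) (hbN : b ≤ N) (hab : a ≠ b) : a * b ∣ N.factorial := by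
  have hsub : ({a, b} : Finset ℕ) ⊆ Finset.Ico 1 (N + 1) := by
    intro x hx
    simp only [Finset.mem_insert, Finset.mem_singleton] at hx
    rcases hx with rfl | rfl <;> simp [Finset.mem_Ico] <;> omega
  have h1 : (∏ i ∈ ({a, b} : Finset ℕ), i) = a * b := Finset.prod_pair hab
  have h2 := Finset.prod_dvd_prod_of_subset _ _ (fun i => i) hsub
  rw [h1, Finset.prod_Ico_id_eq_factorial] at h2
  exact h2

lemma sub_one_dvd_factorial {N p : ℕ} (hN : 2 ≤ N) (hN3 : N ≠ 3) (hp : p.Prime)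
    (hNp : N < p) (hp2N : p ≤ 2 * N - 1) : p - 1 ∣ N.factorial := by
  have hp2 : p ≠ 2 := by omega
  have hodd : Odd p := hp.odd_of_ne_two hp2
  obtain ⟨m, hm⟩ := hodd
  have hm1 : 1 ≤ m := by omega
  have hmN : m ≤ N - 1 := by omega
  have hpm : p - 1 = 2 * m := by omega
  rw [hpm]
  rcases Nat.lt_or_ge m 2 with h | h
  · -- m = 1
    have : m = 1 := by omega
    subst this
    exact Nat.dvd_factorial (by norm_num) hN
  rcases Nat.lt_or_ge m 3 with h2 | h2
  · -- m = 2, p = 5, N = 4 (N=3 excluded)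
    have hm2 : m = 2 := by omega
    have hN4 : N = 4 := by omega
    subst hN4; subst hm2
    decide
  · -- m ≥ 3, so 2 ≠ m, both ≤ N
    exact mul_dvd_factorial_of_ne (by norm_num) hm1 (by omega) (by omega) (by omega)

lemma prime_dvd_M {N p : ℕ} (hN : 2 ≤ N) (hp : p.Prime) (hNp : N < p)
    (hdvd : p - 1 ∣ N.factorial) : p ∣ N.factorial ^ N.factorial - 1 := by
  haveI : Fact p.Prime := ⟨hp⟩
  have hne : (N.factorial : ZMod p) ≠ 0 := by
    rw [Ne, ZMod.natCast_eq_zero_iff, hp.dvd_factorial]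
    omega
  obtain ⟨k, hk⟩ := hdvd
  have hz : (N.factorial : ZMod p) ^ N.factorial = 1 := by
    set a := (N.factorial : ZMod p) with ha
    rw [hk, pow_mul, ZMod.pow_card_sub_one_eq_one hne, one_pow]
  have h1 : ((N.factorial ^ N.factorial : ℕ) : ZMod p) = ((1 : ℕ) : ZMod p) := by
    push_cast
    exact hz
  have h2 : (1 : ℕ) ≡ N.factorial ^ N.factorial [MOD p] :=
    ((ZMod.natCast_eq_natCast_iff _ _ _).mp h1).symm
  exact (Nat.modEq_iff_dvd' (Nat.one_le_pow _ _ N.factorial_pos)).mp h2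

theorem next_prime_eq_least_divisor (N : ℕ) (hN : 1 ≤ N) :
    sInf {p : ℕ | p.Prime ∧ N < p} =
      sInf {d : ℕ | 1 < d ∧ d ∣ (Nat.factorial N) ^ (Nat.factorial N) - 1} := by
  rcases Nat.lt_or_ge N 2 with h1 | h2
  · -- N = 1
    have hN1 : N = 1 := by omega
    subst hN1
    have hP : sInf {p : ℕ | p.Prime ∧ 1 < p} = 2 := by
      apply le_antisymm
      · exact Nat.sInf_le ⟨Nat.prime_two, one_lt_two⟩
      · obtain ⟨-, hlt⟩ := Nat.sInf_mem (⟨2, Nat.prime_two, one_lt_two⟩ :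
          Set.Nonempty {p : ℕ | p.Prime ∧ 1 < p})
        omega
    have hD : sInf {d : ℕ | 1 < d ∧ d ∣ (Nat.factorial 1) ^ (Nat.factorial 1) - 1} = 2 := by
      apply le_antisymm
      · exact Nat.sInf_le ⟨one_lt_two, by simp [Nat.factorial]⟩
      · obtain ⟨hlt, -⟩ := Nat.sInf_mem (⟨2, one_lt_two, by simp [Nat.factorial]⟩ :
          Set.Nonempty {d : ℕ | 1 < d ∧ d ∣ (Nat.factorial 1) ^ (Nat.factorial 1) - 1})
        omega
    rw [hP, hD]
  · -- N ≥ 2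
    set M := (Nat.factorial N) ^ (Nat.factorial N) - 1 with hM
    set P : Set ℕ := {p : ℕ | p.Prime ∧ N < p} with hPdef
    set D : Set ℕ := {d : ℕ | 1 < d ∧ d ∣ M} with hDdef
    have hPne : P.Nonempty := by
      obtain ⟨q, hq1, hq2⟩ := Nat.exists_infinite_primes (N + 1)
      exact ⟨q, hq2, by omega⟩
    set p := sInf P with hpdef
    have hpP : p ∈ P := Nat.sInf_mem hPne
    obtain ⟨hpp, hNp⟩ := hpP
    have hpmin : ∀ q, q.Prime → N < q → p ≤ q := fun q h1 h2 => Nat.sInf_le ⟨h1, h2⟩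
    -- p ∣ M
    have hpM : p ∣ M := by
      rcases eq_or_ne N 3 with rfl | hN3
      · -- p = 5
        have h5 : p ≤ 5 := hpmin 5 (by norm_num) (by norm_num)
        interval_cases p
        · exact absurd hpp (by norm_num)
        · decide
      · -- general: p ≤ 2N - 1
        obtain ⟨q, hq, hq1, hq2⟩ := Nat.exists_prime_lt_and_le_two_mul N (by omega)
        have hpq : p ≤ q := hpmin q hq hq1
        have hp2 : p ≠ 2 := by omega
        have hpeven : p ≠ 2 * N := by
          intro h
          have : 2 ∣ p := ⟨N, h⟩
          have := (Nat.Prime.eq_one_or_self_of_dvd hpp 2 this).resolve_left (by norm_num)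
          omega
        have hple : p ≤ 2 * N - 1 := by omega
        exact prime_dvd_M h2 hpp hNp (sub_one_dvd_factorial h2 hN3 hpp hNp hple)
    have hpD : p ∈ D := ⟨hpp.one_lt, hpM⟩
    set d := sInf D with hddef
    have hdD : d ∈ D := Nat.sInf_mem ⟨p, hpD⟩
    obtain ⟨hd1, hdM⟩ := hdD
    -- d is prime
    have hdne1 : d ≠ 1 := by omega
    have hminfac : d.minFac ∈ D := by
      refine ⟨(Nat.minFac_prime hdne1).one_lt, dvd_trans (Nat.minFac_dvd d) hdM⟩
    have hdprime : d.Prime := by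
      have h1 : d ≤ d.minFac := Nat.sInf_le hminfac
      have h2 : d.minFac ≤ d := Nat.minFac_le (by omega)
      have : d.minFac = d := le_antisymm h2 h1
      rw [← this]
      exact Nat.minFac_prime hdne1
    -- d > N
    have hdN : N < d := by
      by_contra hle
      push_neg at hle
      have hdf : d ∣ N.factorial := Nat.dvd_factorial (by omega) hle
      have hdpow : d ∣ (Nat.factorial N) ^ (Nat.factorial N) :=
        dvd_pow hdf (Nat.factorial_pos N).ne'
      have hpos : 1 ≤ (Nat.factorial N) ^ (Nat.factorial N) :=
        Nat.one_le_pow _ _ N.factorial_pos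
      have : d = 1 := Nat.dvd_one.mp (by
        have := Nat.dvd_sub hdpow hdM
        rwa [Nat.sub_sub_self hpos] at this)
      omega
    have hdP : d ∈ P := ⟨hdprime, hdN⟩
    exact le_antisymm (Nat.sInf_le hdP) (Nat.sInf_le hpD)
end

section
/- Let n > 1 be an integer and let m = ⌈(log n)/(log 2)⌉. Then the least prime divisor of n^(n^m) - 1 is the smallest prime not dividing n. -/
theorem minFac_smaller_superpower (n : ℕ) (hn : 1 < n) (m : ℕ) (hm : m = Nat.clog 2 n) :
    (n ^ (n ^ m) - 1).minFac = sInf {p : ℕ | p.Prime ∧ ¬ p ∣ n} := by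
  have hn0 : n ≠ 0 := by omega
  have hm1 : 1 ≤ m := by
    rw [hm]; exact Nat.clog_pos (by norm_num) hn
  have hnm2 : 2 ≤ n ^ m := by
    calc 2 ≤ n := hn
    _ = n ^ 1 := (pow_one n).symm
    _ ≤ n ^ m := Nat.pow_le_pow_right (by omega) hm1
  have hpow4 : 4 ≤ n ^ (n ^ m) := by
    calc (4 : ℕ) = 2 ^ 2 := rfl
    _ ≤ n ^ 2 := Nat.pow_le_pow_left hn 2
    _ ≤ n ^ (n ^ m) := Nat.pow_le_pow_right (by omega) hnm2
  set N := n ^ (n ^ m) - 1 with hNdef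
  have hN2 : 2 ≤ N := by omega
  have hle2m : n ≤ 2 ^ m := by rw [hm]; exact Nat.le_pow_clog (by norm_num) n
  -- minFac N is a prime not dividing n
  have hmem : (N.minFac) ∈ {p : ℕ | p.Prime ∧ ¬ p ∣ n} := by
    refine ⟨Nat.minFac_prime (by omega), ?_⟩
    intro hd
    have h1 : N.minFac ∣ n ^ (n ^ m) := dvd_pow hd (by omega)
    have h2 : N.minFac ∣ N := Nat.minFac_dvd N
    have h3 : N.minFac ∣ n ^ (n ^ m) - N := Nat.dvd_sub h1 h2
    have h4 : n ^ (n ^ m) - N = 1 := by omega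
    rw [h4] at h3
    have := Nat.minFac_prime (show N ≠ 1 by omega)
    exact this.one_lt.ne' (Nat.eq_one_of_dvd_one h3)
  have hSne : {p : ℕ | p.Prime ∧ ¬ p ∣ n}.Nonempty := ⟨_, hmem⟩
  set p := sInf {p : ℕ | p.Prime ∧ ¬ p ∣ n} with hpdef
  have hps : p ∈ {p : ℕ | p.Prime ∧ ¬ p ∣ n} := Nat.sInf_mem hSne
  have hpp : p.Prime := hps.1
  have hp2 : 2 ≤ p := hpp.two_le
  -- p ≤ n + 1
  have hpn1 : p ≤ n + 1 := by
    have hq : (n + 1).minFac ∈ {p : ℕ | p.Prime ∧ ¬ p ∣ n} := by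
      refine ⟨Nat.minFac_prime (by omega), ?_⟩
      intro hd
      have h1 : (n + 1).minFac ∣ n + 1 := Nat.minFac_dvd _
      have h2 : (n + 1).minFac ∣ (n + 1) - n := Nat.dvd_sub h1 hd
      simp only [Nat.add_sub_cancel_left] at h2
      have := Nat.minFac_prime (show n + 1 ≠ 1 by omega)
      exact this.one_lt.ne' (Nat.eq_one_of_dvd_one h2)
    calc p ≤ (n + 1).minFac := Nat.sInf_le hq
    _ ≤ n + 1 := Nat.minFac_le (by omega)
  -- p - 1 divides n ^ m
  have hdvd : p - 1 ∣ n ^ m := by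
    rw [← Nat.factorization_le_iff_dvd (by omega) (pow_ne_zero m hn0)]
    rw [Finsupp.le_def]
    intro q
    rw [Nat.factorization_pow]
    simp only [Finsupp.smul_apply, smul_eq_mul]
    by_cases hq : q.Prime
    · by_cases hqd : q ∣ p - 1
      · have hqn : q ∣ n := by
          by_contra h
          have hqS : q ∈ {p : ℕ | p.Prime ∧ ¬ p ∣ n} := ⟨hq, h⟩
          have h1 : p ≤ q := Nat.sInf_le hqS
          have h2 : q ≤ p - 1 := Nat.le_of_dvd (by omega) hqd
          omega
        have h1 : 1 ≤ n.factorization q := hq.factorization_pos_of_dvd hn0 hqn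
        have ha : q ^ ((p - 1).factorization q) ≤ p - 1 := Nat.ordProj_le q (by omega)
        have h2a : 2 ^ ((p - 1).factorization q) ≤ 2 ^ m := by
          calc 2 ^ ((p - 1).factorization q) ≤ q ^ ((p - 1).factorization q) :=
                Nat.pow_le_pow_left hq.two_le _
          _ ≤ p - 1 := ha
          _ ≤ n := by omega
          _ ≤ 2 ^ m := hle2m
        have hlem : (p - 1).factorization q ≤ m :=
          (Nat.pow_le_pow_iff_right one_lt_two).mp h2a
        calc (p - 1).factorization q ≤ m := hlem
        _ = m * 1 := (mul_one m).symm
        _ ≤ m * n.factorization q := Nat.mul_le_mul_left m h1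
      · simp [Nat.factorization_eq_zero_of_not_dvd hqd]
    · simp [Nat.factorization_eq_zero_of_not_prime _ hq]
  -- p divides N
  have hdvdN : p ∣ N := by
    haveI : Fact p.Prime := ⟨hpp⟩
    have hu : (n : ZMod p) ≠ 0 := by
      rw [Ne, ZMod.natCast_eq_zero_iff]
      exact hps.2
    have h1 : (n : ZMod p) ^ (p - 1) = 1 := ZMod.pow_card_sub_one_eq_one hu
    obtain ⟨k, hk⟩ := hdvd
    have h2 : (n : ZMod p) ^ (n ^ m) = 1 := by
      rw [hk, pow_mul, h1, one_pow]
    have h3 : ((N : ℕ) : ZMod p) = 0 := by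
      rw [hNdef, Nat.cast_sub (by omega), Nat.cast_pow, Nat.cast_one, h2, sub_self]
    exact (ZMod.natCast_eq_zero_iff _ _).mp h3
  have le1 : N.minFac ≤ p := Nat.minFac_le_of_dvd hp2 hdvdN
  have le2 : p ≤ N.minFac := Nat.sInf_le hmem
  omega
end
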